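/- Let p be a prime, C an [n,k] linear code over 𝔽_p with dual C^⊥, and let 𝒞 = {(c_1, c_2) ∈ 𝔽_p^n × 𝔽_p^n : c_1 ∈ C^⊥, c_2 ∈ C}. Then 𝒞 is self-dual with respect to the form (c_1,c_2) ⊙ (c_1',c_2') = c_1·c_2' + c_2·c_1', and moreover the Construction A lattice Λ(𝒞) is even and self-dual with respect to the corresponding Lorentzian form, for all primes p (including p = 2). -/

import Mathlib

/-!
The ⊙-dual of a product code `A × B` is `B^⊥ × A^⊥` (dot-product duals, factors swapped), so the
dual of `C^⊥ × C` is `C^⊥ × C^⊥⊥ = C^⊥ × C`, using `C^⊥⊥ = C` over the field `𝔽_p`.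

For Construction A, `(v/√p) ⊙ (u/√p) = (v ⊙ u)/p` is an integer iff `v ⊙ u ≡ 0 (mod p)`, and
pairing with the lattice vectors `√p eⱼ` (present because `0 ∈ 𝒞`) shows that every dual
vector lies in `ℤ^{2n}/√p`; hence `Λ(𝒞)^* = Λ(𝒞^⊥)`. Evenness comes from `v ⊙ v = 2 v₁·v₂`
with `v₁·v₂ ≡ 0 (mod p)` for `v₁ ∈ C^⊥`, `v₂ ∈ C` (no division by 2, so `p = 2` is included).
-/

open Matrix

/-- The inner product on `𝔽_p^{2n}` with respect to the off-diagonal Lorentzian metric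
`η = [[0,I_n],[I_n,0]]`: `(c₁,c₂) ⊙ (c₁',c₂') = c₁·c₂' + c₂·c₁'`. -/
def etaDot (p n : ℕ) (c c' : Fin n ⊕ Fin n → ZMod p) : ZMod p :=
  ∑ i : Fin n, (c (Sum.inl i) * c' (Sum.inr i) + c (Sum.inr i) * c' (Sum.inl i))

/-- The dual code with respect to `⊙` mod `p`. -/
def dualCode (p n : ℕ) (𝒞 : Set (Fin n ⊕ Fin n → ZMod p)) :
    Set (Fin n ⊕ Fin n → ZMod p) :=
  {c' | ∀ c ∈ 𝒞, etaDot p n c' c = 0}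

/-- The Construction A lattice `Λ(𝒞) = {v/√p : v ∈ ℤ^{2n}, v mod p ∈ 𝒞}`. -/
def latticeA (p n : ℕ) (𝒞 : Set (Fin n ⊕ Fin n → ZMod p)) :
    Set (Fin n ⊕ Fin n → ℝ) :=
  {x | ∃ v : Fin n ⊕ Fin n → ℤ, (fun i => ((v i : ZMod p))) ∈ 𝒞 ∧
        x = fun i => (v i : ℝ) / Real.sqrt p}

/-- The real bilinear form `λ ⊙ λ'` with respect to `η = [[0,I_n],[I_n,0]]`. -/
def etaDotR (n : ℕ) (x y : Fin n ⊕ Fin n → ℝ) : ℝ :=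
  ∑ i : Fin n, (x (Sum.inl i) * y (Sum.inr i) + x (Sum.inr i) * y (Sum.inl i))

/-- The dual lattice with respect to `⊙`. -/
def dualLattice (n : ℕ) (Λ : Set (Fin n ⊕ Fin n → ℝ)) :
    Set (Fin n ⊕ Fin n → ℝ) :=
  {y | ∀ x ∈ Λ, ∃ m : ℤ, etaDotR n y x = m}

section DotProductOrthogonal

variable {K ι : Type*} [Field K] [Fintype ι]

theorem dotProductBilin_nondegenerate :
    (dotProductBilin K K : LinearMap.BilinForm K (ι → K)).Nondegenerate :=
  ⟨fun _ hx => dotProduct_eq_zero _ hx,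
    fun _ hy => dotProduct_eq_zero _ fun x => (dotProduct_comm _ x).trans (hy x)⟩

theorem dotProductBilin_isRefl :
    LinearMap.BilinForm.IsRefl (dotProductBilin K K : LinearMap.BilinForm K (ι → K)) :=
  fun x y h => (dotProduct_comm y x).trans h

theorem Submodule.mem_iff_forall_dotProduct_orthogonal (C : Submodule K (ι → K)) (w : ι → K) :
    w ∈ C ↔ ∀ a, (∀ c ∈ C, c ⬝ᵥ a = 0) → a ⬝ᵥ w = 0 := by
  conv_lhs => rw [← LinearMap.BilinForm.orthogonal_orthogonal
    (dotProductBilin_nondegenerate (ι := ι)) dotProductBilin_isRefl C]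
  simp

end DotProductOrthogonal

section Code

variable {p n : ℕ}

theorem etaDot_eq_dotProduct (c c' : Fin n ⊕ Fin n → ZMod p) :
    etaDot p n c c' = (fun i => c (Sum.inl i)) ⬝ᵥ (fun i => c' (Sum.inr i)) +
      (fun i => c (Sum.inr i)) ⬝ᵥ (fun i => c' (Sum.inl i)) :=
  Finset.sum_add_distrib

theorem zero_mem_dualCode (𝒞 : Set (Fin n ⊕ Fin n → ZMod p)) : 0 ∈ dualCode p n 𝒞 :=
  fun c _ => by simp [etaDot]

theorem dualCode_prod (A B : Set (Fin n → ZMod p)) (hA : 0 ∈ A) (hB : 0 ∈ B) :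
    dualCode p n {w | (fun i => w (Sum.inl i)) ∈ A ∧ (fun i => w (Sum.inr i)) ∈ B} =
      {w | (∀ b ∈ B, (fun i => w (Sum.inl i)) ⬝ᵥ b = 0) ∧
        ∀ a ∈ A, (fun i => w (Sum.inr i)) ⬝ᵥ a = 0} := by
  ext w
  simp only [dualCode, Set.mem_ofPred_eq, etaDot_eq_dotProduct]
  constructor
  · intro hw
    constructor
    · intro b hb
      simpa using hw (Sum.elim 0 b) ⟨hA, hb⟩
    · intro a ha
      simpa using hw (Sum.elim a 0) ⟨ha, hB⟩
  · rintro ⟨hw₁, hw₂⟩ c ⟨hc₁, hc₂⟩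
    rw [hw₁ _ hc₂, hw₂ _ hc₁, add_zero]

def cssCode (C : Submodule (ZMod p) (Fin n → ZMod p)) : Set (Fin n ⊕ Fin n → ZMod p) :=
  {w | (fun i => w (Sum.inl i)) ∈ {c' | ∀ c ∈ C, c ⬝ᵥ c' = 0} ∧ (fun i => w (Sum.inr i)) ∈ C}

theorem dualCode_cssCode [Fact p.Prime] (C : Submodule (ZMod p) (Fin n → ZMod p)) :
    dualCode p n (cssCode C) = cssCode C := by
  have hzero : (0 : Fin n → ZMod p) ∈ {c' | ∀ c ∈ C, c ⬝ᵥ c' = 0} := fun c _ => dotProduct_zero c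
  refine (dualCode_prod _ (C : Set (Fin n → ZMod p)) hzero C.zero_mem).trans ?_
  ext w
  simp only [cssCode, Set.mem_ofPred_eq,
    C.mem_iff_forall_dotProduct_orthogonal (fun i => w (Sum.inr i))]
  refine and_congr (forall₂_congr fun c _ => ?_) (forall₂_congr fun a _ => ?_) <;>
    rw [dotProduct_comm]

end Code

section Lattice

variable {p n : ℕ}

def etaDotZ (n : ℕ) (v u : Fin n ⊕ Fin n → ℤ) : ℤ :=
  ∑ i : Fin n, (v (Sum.inl i) * u (Sum.inr i) + v (Sum.inr i) * u (Sum.inl i))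

theorem intCast_etaDotZ (v u : Fin n ⊕ Fin n → ℤ) :
    (etaDotZ n v u : ZMod p) =
      etaDot p n (fun i => (v i : ZMod p)) (fun i => (u i : ZMod p)) := by
  simp [etaDotZ, etaDot]

theorem etaDotR_div_sqrt (v u : Fin n ⊕ Fin n → ℤ) :
    etaDotR n (fun i => (v i : ℝ) / √p) (fun i => (u i : ℝ) / √p) = etaDotZ n v u / p := by
  have hs : √(p : ℝ) * √p = p := Real.mul_self_sqrt p.cast_nonneg
  simp only [etaDotR, etaDotZ, Int.cast_sum, Int.cast_add, Int.cast_mul, Finset.sum_div]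
  refine Finset.sum_congr rfl fun i _ => ?_
  rw [div_mul_div_comm, div_mul_div_comm, hs, add_div]

theorem exists_int_div_eq_iff [NeZero p] (s : ℤ) :
    (∃ m : ℤ, (s : ℝ) / p = m) ↔ (p : ℤ) ∣ s := by
  have hp' : (p : ℝ) ≠ 0 := Nat.cast_ne_zero.2 (NeZero.ne p)
  constructor
  · rintro ⟨m, hm⟩
    refine ⟨m, ?_⟩
    rw [div_eq_iff hp'] at hm
    exact_mod_cast hm.trans (mul_comm _ _)
  · rintro ⟨m, rfl⟩
    exact ⟨m, by push_cast; field_simp⟩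

theorem exists_int_etaDotR_iff [NeZero p] (v u : Fin n ⊕ Fin n → ℤ) :
    (∃ m : ℤ, etaDotR n (fun i => (v i : ℝ) / √p) (fun i => (u i : ℝ) / √p) = m) ↔
      etaDot p n (fun i => (v i : ZMod p)) (fun i => (u i : ZMod p)) = 0 := by
  rw [etaDotR_div_sqrt, exists_int_div_eq_iff, ← intCast_etaDotZ,
    ZMod.intCast_zmod_eq_zero_iff_dvd]

theorem etaDotR_single (y : Fin n ⊕ Fin n → ℝ) (j : Fin n ⊕ Fin n) (a : ℝ) :
    etaDotR n y (Pi.single j a) = y j.swap * a := by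
  cases j <;> simp [etaDotR, Pi.single_apply]

theorem etaDotZ_self (v : Fin n ⊕ Fin n → ℤ) :
    etaDotZ n v v = 2 * ((fun i => v (Sum.inl i)) ⬝ᵥ fun i => v (Sum.inr i)) := by
  simp only [etaDotZ, dotProduct, Finset.mul_sum]
  exact Finset.sum_congr rfl fun i _ => by ring

theorem latticeA_even [NeZero p] (𝒞 : Set (Fin n ⊕ Fin n → ZMod p))
    (h𝒞 : ∀ c ∈ 𝒞, ((fun i => c (Sum.inl i)) ⬝ᵥ fun i => c (Sum.inr i)) = 0) :
    ∀ x ∈ latticeA p n 𝒞, ∃ m : ℤ, etaDotR n x x = 2 * m := by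
  rintro x ⟨v, hv, rfl⟩
  have hp : (p : ℝ) ≠ 0 := Nat.cast_ne_zero.2 (NeZero.ne p)
  have hdvd : (p : ℤ) ∣ (fun i => v (Sum.inl i)) ⬝ᵥ fun i => v (Sum.inr i) := by
    rw [← ZMod.intCast_zmod_eq_zero_iff_dvd, ← h𝒞 _ hv]
    simp [dotProduct]
  obtain ⟨m, hm⟩ := hdvd
  refine ⟨m, ?_⟩
  rw [etaDotR_div_sqrt, etaDotZ_self, hm]
  push_cast
  field_simp

theorem latticeA_single_mem [NeZero p] {𝒞 : Set (Fin n ⊕ Fin n → ZMod p)} (h0 : 0 ∈ 𝒞)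
    (j : Fin n ⊕ Fin n) : (Pi.single j √p : Fin n ⊕ Fin n → ℝ) ∈ latticeA p n 𝒞 := by
  refine ⟨Pi.single j (p : ℤ), ?_, ?_⟩
  · convert h0 using 1
    ext k
    by_cases hk : k = j <;> simp [hk]
  · ext k
    by_cases hk : k = j <;> simp [hk, Real.div_sqrt]

theorem exists_int_of_mem_dualLattice [NeZero p] {𝒞 : Set (Fin n ⊕ Fin n → ZMod p)}
    (h0 : 0 ∈ 𝒞) {y : Fin n ⊕ Fin n → ℝ} (hy : y ∈ dualLattice n (latticeA p n 𝒞)) :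
    ∃ v : Fin n ⊕ Fin n → ℤ, y = fun i => (v i : ℝ) / √p := by
  have hsqrt : √(p : ℝ) ≠ 0 := by simp [NeZero.ne p]
  have hcoord (j : Fin n ⊕ Fin n) : ∃ m : ℤ, y j = m / √p := by
    obtain ⟨m, hm⟩ := hy _ (latticeA_single_mem h0 j.swap)
    rw [etaDotR_single, Sum.swap_swap] at hm
    exact ⟨m, by rw [← hm, mul_div_cancel_right₀ _ hsqrt]⟩
  choose v hv using hcoord
  exact ⟨v, funext hv⟩

theorem dualLattice_latticeA [NeZero p] {𝒞 : Set (Fin n ⊕ Fin n → ZMod p)} (h0 : 0 ∈ 𝒞) :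
    dualLattice n (latticeA p n 𝒞) = latticeA p n (dualCode p n 𝒞) := by
  ext y
  constructor
  · intro hy
    obtain ⟨v, rfl⟩ := exists_int_of_mem_dualLattice h0 hy
    refine ⟨v, fun c hc => ?_, rfl⟩
    set u : Fin n ⊕ Fin n → ℤ := fun i => (c i).cast
    have hu : (fun i => (u i : ZMod p)) = c := funext fun i => ZMod.intCast_zmod_cast (c i)
    rw [← hu] at hc ⊢
    exact (exists_int_etaDotR_iff v u).1 (hy _ ⟨u, hc, rfl⟩)
  · rintro ⟨v, hv, rfl⟩ x ⟨u, hu, rfl⟩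
    exact (exists_int_etaDotR_iff v u).2 (hv _ hu)

end Lattice

/-- CSS construction: for a linear code `C` over `𝔽_p` with dual `C^⊥`, the code
`𝒞 = {(c₁,c₂) : c₁ ∈ C^⊥, c₂ ∈ C}` is self-dual with respect to `⊙`, and the
Construction A lattice `Λ(𝒞)` is self-dual and even — for every prime `p`, including
`p = 2`. -/
theorem stmt10 (p n : ℕ) (hp : p.Prime)
    (C : Submodule (ZMod p) (Fin n → ZMod p)) :
    let Cperp : Set (Fin n → ZMod p) := {c' | ∀ c ∈ C, c ⬝ᵥ c' = 0}
    let 𝒞 : Set (Fin n ⊕ Fin n → ZMod p) :=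
      {w | (fun i => w (Sum.inl i)) ∈ Cperp ∧ (fun i => w (Sum.inr i)) ∈ C}
    dualCode p n 𝒞 = 𝒞 ∧
    dualLattice n (latticeA p n 𝒞) = latticeA p n 𝒞 ∧
    (∀ x ∈ latticeA p n 𝒞, ∃ m : ℤ, etaDotR n x x = 2 * m) := by
  intro Cperp 𝒞
  have : Fact p.Prime := ⟨hp⟩
  have hcode : dualCode p n 𝒞 = 𝒞 := dualCode_cssCode C
  have h0 : 0 ∈ 𝒞 := hcode ▸ zero_mem_dualCode 𝒞
  refine ⟨hcode, by rw [dualLattice_latticeA h0, hcode], latticeA_even 𝒞 ?_⟩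
  exact fun c hc => (dotProduct_comm _ _).trans (hc.1 _ hc.2)
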